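/- For the level ℓ = 1 case: a partition λ of n is an Uglov (equivalently, staggered) partition for the parameter e if and only if λ is e-restricted, i.e. λ_i − λ_{i+1} < e for all i ≥ 1. -/

import Mathlib

namespace CQHA

/-- A box (node) `(r, c, l)` with component `comp`, row `row` and column `col`
(rows and columns zero-indexed). -/
structure Box (ℓ : ℕ) where
  comp : Fin ℓ
  row : ℕ
  col : ℕ
deriving DecidableEq

/-- An `ℓ`-multipartition, recorded by the row lengths of each component. -/
structure Multipartition (ℓ : ℕ) where
  part : Fin ℓ → ℕ → ℕ
  antitone : ∀ l, Antitone (part l)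
  finite : ∀ l, ∃ N, ∀ i, N ≤ i → part l i = 0

variable {ℓ : ℕ}

/-- The set of boxes (cells) of the Young diagram of a multipartition. -/
def cells (lam : Multipartition ℓ) : Set (Box ℓ) :=
  {b | b.col < lam.part b.comp b.row}

/-- The number of boxes of a multipartition. -/
noncomputable def size (lam : Multipartition ℓ) : ℕ := (cells lam).ncard

/-- The number of boxes of the `l`-th component. -/
noncomputable def csize (lam : Multipartition ℓ) (l : Fin ℓ) : ℕ := ∑ᶠ r, lam.part l r

/-- The residue `c - r + κ_l` of a box, for a multicharge `κ`. -/
def res (e : ℕ) (κ : Fin ℓ → ZMod e) (b : Box ℓ) : ZMod e :=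
  (b.col : ZMod e) - (b.row : ZMod e) + κ b.comp

/-- Lexicographic key realizing the total order `≺_θ` attached to the loading `θ`
(with an infinitesimally small `ε`): compare `θ_l + (r - c)·ℓ` first and then `r + c`. -/
def key (θ : Fin ℓ → ℤ) (b : Box ℓ) : ℤ × ℤ :=
  (θ b.comp + ((b.row : ℤ) - (b.col : ℤ)) * (ℓ : ℤ), (b.row : ℤ) + (b.col : ℤ))

/-- `a ≺_θ b` : the box `a` is strictly to the left of the box `b`. -/
def Bleft (θ : Fin ℓ → ℤ) (a b : Box ℓ) : Prop :=
  Prod.Lex (· < ·) (· < ·) (key θ a) (key θ b)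

/-- `b` is an addable box of the diagram `S`. -/
def AddableS (S : Set (Box ℓ)) (b : Box ℓ) : Prop :=
  b ∉ S ∧ (b.col = 0 ∨ (⟨b.comp, b.row, b.col - 1⟩ : Box ℓ) ∈ S) ∧
    (b.row = 0 ∨ (⟨b.comp, b.row - 1, b.col⟩ : Box ℓ) ∈ S)

/-- `b` is a removable box of the diagram `S`. -/
def RemovableS (S : Set (Box ℓ)) (b : Box ℓ) : Prop :=
  b ∈ S ∧ (⟨b.comp, b.row, b.col + 1⟩ : Box ℓ) ∉ S ∧ (⟨b.comp, b.row + 1, b.col⟩ : Box ℓ) ∉ S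

/-- `b` is an addable-or-removable box of `lam` of residue `i`. -/
def BTheta (e : ℕ) (κ : Fin ℓ → ZMod e) (lam : Multipartition ℓ) (i : ZMod e)
    (b : Box ℓ) : Prop :=
  (AddableS (cells lam) b ∨ RemovableS (cells lam) b) ∧ res e κ b = i

/-- `a` and `b` are adjacent among the addable-or-removable `i`-boxes of `lam`,
with `a` strictly to the left of `b`. -/
def AdjacentB (e : ℕ) (κ : Fin ℓ → ZMod e) (θ : Fin ℓ → ℤ) (lam : Multipartition ℓ)
    (i : ZMod e) (a b : Box ℓ) : Prop :=
  BTheta e κ lam i a ∧ BTheta e κ lam i b ∧ Bleft θ a b ∧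
    ∀ x, BTheta e κ lam i x → ¬ (Bleft θ a x ∧ Bleft θ x b)

/-- A `(θ, i)`-staggered sequence of `lam`. -/
structure Staggered (e : ℕ) (κ : Fin ℓ → ZMod e) (θ : Fin ℓ → ℤ)
    (lam : Multipartition ℓ) (i : ZMod e) (s : List (Box ℓ)) : Prop where
  ne : s ≠ []
  nodup : s.Nodup
  removable : ∀ b ∈ s, RemovableS (cells lam) b ∧ res e κ b = i
  chain : s.Chain' (AdjacentB e κ θ lam i)
  last_max : ∀ b, BTheta e κ lam i b → b = s.getLast ne ∨ Bleft θ b (s.getLast ne)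
  head_min : ∀ a, AdjacentB e κ θ lam i a (s.head ne) → AddableS (cells lam) a

/-- The set of Uglov (equivalently, staggered) multipartitions, defined recursively:
`lam` is Uglov iff it is empty or it has a staggered sequence whose removal yields an
Uglov multipartition. -/
inductive Uglov (e : ℕ) (κ : Fin ℓ → ZMod e) (θ : Fin ℓ → ℤ) : Multipartition ℓ → Prop
  | empty (lam : Multipartition ℓ) (h : cells lam = ∅) : Uglov e κ θ lam
  | step (lam mu : Multipartition ℓ) (i : ZMod e) (s : List (Box ℓ))
      (hs : Staggered e κ θ lam i s) (hmu : cells mu = cells lam \ {b | b ∈ s})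
      (h : Uglov e κ θ mu) : Uglov e κ θ lam

/-- `L` is a decomposition path for `lam`: a sequence of staggered sequences removing
`lam` down to the empty multipartition. -/
inductive IsDecompPath (e : ℕ) (κ : Fin ℓ → ZMod e) (θ : Fin ℓ → ℤ) :
    Multipartition ℓ → List (List (Box ℓ)) → Prop
  | nil (lam : Multipartition ℓ) (h : cells lam = ∅) : IsDecompPath e κ θ lam []
  | cons (lam mu : Multipartition ℓ) (i : ZMod e) (s : List (Box ℓ))
      (L : List (List (Box ℓ)))
      (hs : Staggered e κ θ lam i s) (hmu : cells mu = cells lam \ {b | b ∈ s})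
      (h : IsDecompPath e κ θ mu L) : IsDecompPath e κ θ lam (s :: L)

/-- A standard tableau with entries `1, ..., n` on the diagram `S`: a bijection onto
`{1, ..., n}` increasing along rows and columns. -/
def IsStd (S : Set (Box ℓ)) (n : ℕ) (f : Box ℓ → ℕ) : Prop :=
  (∀ b ∈ S, 1 ≤ f b ∧ f b ≤ n) ∧
  (∀ a ∈ S, ∀ b ∈ S, f a = f b → a = b) ∧
  (∀ m : ℕ, 1 ≤ m → m ≤ n → ∃ b ∈ S, f b = m) ∧
  (∀ b : Box ℓ, b ∈ S → (⟨b.comp, b.row + 1, b.col⟩ : Box ℓ) ∈ S →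
    f b < f ⟨b.comp, b.row + 1, b.col⟩) ∧
  (∀ b : Box ℓ, b ∈ S → (⟨b.comp, b.row, b.col + 1⟩ : Box ℓ) ∈ S →
    f b < f ⟨b.comp, b.row, b.col + 1⟩)

/-- `b` belongs to the `j`-th staggered sequence of the path `L`. -/
def InSeq (L : List (List (Box ℓ))) (j : ℕ) (b : Box ℓ) : Prop :=
  ∃ h : j < L.length, b ∈ L.get ⟨j, h⟩

/-- The positive decomposition tableau `t_d` of a decomposition path: entries increase
from left to right within each staggered sequence, and boxes of later staggered sequences
get smaller entries. -/
def IsPosTab (θ : Fin ℓ → ℤ) (S : Set (Box ℓ)) (n : ℕ) (L : List (List (Box ℓ)))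
    (f : Box ℓ → ℕ) : Prop :=
  IsStd S n f ∧
  (∀ j a b, InSeq L j a → InSeq L j b → Bleft θ a b → f a < f b) ∧
  (∀ j j' a b, j' < j → InSeq L j a → InSeq L j' b → f a < f b)

/-- The negative decomposition tableau `t_d^◇` of a decomposition path: entries decrease
from left to right within each staggered sequence, and boxes of later staggered sequences
get smaller entries. -/
def IsNegTab (θ : Fin ℓ → ℤ) (S : Set (Box ℓ)) (n : ℕ) (L : List (List (Box ℓ)))
    (f : Box ℓ → ℕ) : Prop :=
  IsStd S n f ∧
  (∀ j a b, InSeq L j a → InSeq L j b → Bleft θ a b → f b < f a) ∧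
  (∀ j j' a b, j' < j → InSeq L j a → InSeq L j' b → f a < f b)

/-- The tableaux `f` (on the diagram `S`) and `g` (on the diagram `S'`) have the same
residue sequence: boxes carrying equal entries have equal residues. -/
def SameResSeq (e : ℕ) (κ : Fin ℓ → ZMod e) (S S' : Set (Box ℓ))
    (f g : Box ℓ → ℕ) : Prop :=
  ∀ a ∈ S, ∀ b ∈ S', f a = g b → res e κ a = res e κ b

/-- The tableau `g` is obtained from `f` by permuting the entries within each staggered
sequence of `L` (the action of an element of the Young subgroup `S_d`). -/
def TwistOf (L : List (List (Box ℓ))) (f g : Box ℓ → ℕ) : Prop :=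
  (∀ j a, InSeq L j a → ∃ b, InSeq L j b ∧ g b = f a) ∧
  (∀ j b, InSeq L j b → ∃ a, InSeq L j a ∧ g b = f a)

/-- The contribution of the box `b` to the degree of the tableau `f` on `S`: the number of
addable minus the number of removable boxes of `shape(f↓(f b))` with the same residue as
`b`, strictly to the right of `b`. -/
noncomputable def degContrib (e : ℕ) (κ : Fin ℓ → ZMod e) (θ : Fin ℓ → ℤ)
    (S : Set (Box ℓ)) (f : Box ℓ → ℕ) (b : Box ℓ) : ℤ :=
  (({a | AddableS {x | x ∈ S ∧ f x ≤ f b} a ∧ res e κ a = res e κ b ∧ Bleft θ b a}.ncard : ℤ))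
    - (({a | RemovableS {x | x ∈ S ∧ f x ≤ f b} a ∧ res e κ a = res e κ b ∧
          Bleft θ b a}.ncard : ℤ))

/-- The degree `deg_θ` of a standard tableau `f` on the diagram `S`. -/
noncomputable def degTab (e : ℕ) (κ : Fin ℓ → ZMod e) (θ : Fin ℓ → ℤ)
    (S : Set (Box ℓ)) (f : Box ℓ → ℕ) : ℤ :=
  ∑ᶠ b ∈ S, degContrib e κ θ S f b

/-- The number of inversions within the staggered sequences of the tableau `f`: this is the
Coxeter length of the Young-subgroup element twisting the positive decomposition tableau
into `f`. -/
noncomputable def invCountTab (θ : Fin ℓ → ℤ) (L : List (List (Box ℓ)))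
    (f : Box ℓ → ℕ) : ℕ :=
  Set.ncard {p : Box ℓ × Box ℓ |
    (∃ j, InSeq L j p.1 ∧ InSeq L j p.2) ∧ Bleft θ p.1 p.2 ∧ f p.2 < f p.1}

/-- The number of pairs of boxes in a common staggered sequence of `L`: this is the Coxeter
length `ℓ(ω₀^d)` of the longest element of the Young subgroup `S_d`. -/
noncomputable def pairCount (θ : Fin ℓ → ℤ) (L : List (List (Box ℓ))) : ℕ :=
  Set.ncard {p : Box ℓ × Box ℓ | (∃ j, InSeq L j p.1 ∧ InSeq L j p.2) ∧ Bleft θ p.1 p.2}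

end CQHA

/-
At level one the addable and removable boxes have pairwise distinct contents `c - r`, and `≺_θ`
lists them by decreasing content, so for each residue `i` a staggered sequence is exactly the
maximal run of removable `i`-boxes at the right end of the `i`-boxes; removing it shortens each
row by at most one.

If `λ_r - λ_{r+1} ≥ e` and the removed partition is `e`-restricted, the run must take the last box
`b` of row `r` and `λ_r - λ_{r+1} = e`; then the addable box ending row `r + 1` has content
`content b - e`, hence residue `i`, and interrupts the run to the right of `b`.

Conversely, for an `e`-restricted `λ` let `i` be the residue of the last box of the last nonempty
row. No `i`-box lies to its right (the addable box below it would need `e ∣ λ_last < e`), so the run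
exists; and removing it keeps `λ` restricted, since a row `r` with `λ_r + 1 = λ_{r+1} + e` whose
successor lies in the run lies in the run itself.
-/

theorem List.Pairwise.isChain_consecutive {α : Type*} [LinearOrder α] {l : List α}
    (hl : l.Pairwise (· < ·)) : l.IsChain (fun a b => a < b ∧ ∀ x ∈ l, ¬ (a < x ∧ x < b)) := by
  induction l with
  | nil => exact .nil
  | cons a t ih =>
    obtain ⟨ha, ht⟩ := List.pairwise_cons.mp hl
    have htail : t.IsChain (fun a' b => a' < b ∧ ∀ x ∈ a :: t, ¬ (a' < x ∧ x < b)) := by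
      refine (ih ht).imp_of_mem_imp fun u v hu _ ⟨huv, hgap⟩ => ⟨huv, fun x hx => ?_⟩
      rcases List.mem_cons.mp hx with rfl | hx
      · exact fun h => lt_asymm h.1 (ha u hu)
      · exact hgap x hx
    refine htail.cons fun y hy => ?_
    obtain ⟨t', rfl⟩ : ∃ t', t = y :: t' := by
      cases t with
      | nil => simp at hy
      | cons y' t' => simp only [List.head?_cons, Option.mem_some_iff] at hy; exact ⟨t', hy ▸ rfl⟩
    refine ⟨ha y List.mem_cons_self, fun x hx ⟨hax, hxy⟩ => ?_⟩
    rcases List.mem_cons.mp hx with rfl | hx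
    · exact lt_irrefl _ hax
    rcases List.mem_cons.mp hx with rfl | hx
    · exact lt_irrefl _ hxy
    · exact lt_asymm hxy ((List.pairwise_cons.mp ht).1 x hx)

namespace CQHA

theorem bleft_asymm {ℓ : ℕ} {θ : Fin ℓ → ℤ} {a b : Box ℓ} (hab : Bleft θ a b) :
    ¬ Bleft θ b a := by
  rw [Bleft, Prod.lex_iff] at *
  omega

theorem part_eq_of_cells_eq {ℓ : ℕ} {lam mu : Multipartition ℓ} (h : cells lam = cells mu) :
    lam.part = mu.part := by
  funext l r
  have hlt : ∀ c, c < lam.part l r ↔ c < mu.part l r := fun c => Set.ext_iff.mp h ⟨l, r, c⟩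
  exact le_antisymm (le_of_forall_lt fun c => (hlt c).1) (le_of_forall_lt fun c => (hlt c).2)

theorem Box.ext_one {a b : Box 1} (hr : a.row = b.row) (hc : a.col = b.col) : a = b := by
  obtain ⟨x, r, c⟩ := a
  obtain ⟨y, r', c'⟩ := b
  obtain rfl : x = y := Subsingleton.elim x y
  simp_all

def content (b : Box 1) : ℤ := b.col - b.row

/-- The last box of row `r`; for an empty row truncated subtraction puts it in column `0`. -/
def endBox (lam : Multipartition 1) (r : ℕ) : Box 1 := ⟨0, r, lam.part 0 r - 1⟩

def IsRestricted (e : ℕ) (lam : Multipartition 1) : Prop :=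
  ∀ r, lam.part 0 r - lam.part 0 (r + 1) < e

variable {e : ℕ} {κ : Fin 1 → ZMod e} {θ : Fin 1 → ℤ} {lam : Multipartition 1} {i : ZMod e}

@[simp] theorem endBox_row (r : ℕ) : (endBox lam r).row = r := rfl

@[simp] theorem endBox_col (r : ℕ) : (endBox lam r).col = lam.part 0 r - 1 := rfl

theorem endBox_injective : Function.Injective (endBox lam) :=
  fun _ _ h => congrArg Box.row h

theorem mem_cells_one {b : Box 1} : b ∈ cells lam ↔ b.col < lam.part 0 b.row := by
  rw [cells, Set.mem_ofPred_eq, Subsingleton.elim b.comp 0]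

theorem cells_finite (lam : Multipartition 1) : (cells lam).Finite := by
  obtain ⟨N, hN⟩ := lam.finite 0
  refine ((Set.finite_Iio N).prod (Set.finite_Iio (lam.part 0 0))).image
    (fun rc => (⟨0, rc.1, rc.2⟩ : Box 1)) |>.subset fun b hb => ?_
  have hb' := mem_cells_one.mp hb
  have hrow : b.row < N := by
    by_contra! hge
    rw [hN b.row hge] at hb'
    omega
  exact ⟨(b.row, b.col), ⟨hrow, hb'.trans_le (lam.antitone 0 (Nat.zero_le _))⟩,
    Box.ext_one rfl rfl⟩

theorem part_eq_zero_of_cells_eq_empty (h : cells lam = ∅) (r : ℕ) : lam.part 0 r = 0 := by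
  by_contra hne
  have hb : (⟨0, r, 0⟩ : Box 1) ∈ cells lam := mem_cells_one.mpr (Nat.pos_of_ne_zero hne)
  simp [h] at hb

theorem exists_part_pos_part_succ_eq_zero (h : (cells lam).Nonempty) :
    ∃ r, 0 < lam.part 0 r ∧ lam.part 0 (r + 1) = 0 := by
  obtain ⟨b, hb⟩ := h
  have h0 : 0 < lam.part 0 0 :=
    (Nat.zero_lt_of_lt (mem_cells_one.mp hb)).trans_le (lam.antitone 0 (Nat.zero_le _))
  by_contra! hstep
  have hpos : ∀ r, 0 < lam.part 0 r := fun r => by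
    induction r with
    | zero => exact h0
    | succ r ih => exact Nat.pos_of_ne_zero (hstep r ih)
  obtain ⟨N, hN⟩ := lam.finite 0
  exact (hpos N).ne' (hN N le_rfl)

theorem removableS_cells_iff {b : Box 1} :
    RemovableS (cells lam) b ↔
      b.col + 1 = lam.part 0 b.row ∧ lam.part 0 (b.row + 1) < lam.part 0 b.row := by
  simp only [RemovableS, mem_cells_one]
  have := lam.antitone 0 (Nat.le_add_right b.row 1)
  omega

theorem addableS_cells_iff {b : Box 1} :
    AddableS (cells lam) b ↔
      b.col = lam.part 0 b.row ∧ (b.row = 0 ∨ lam.part 0 b.row < lam.part 0 (b.row - 1)) := by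
  simp only [AddableS, mem_cells_one]
  have := lam.antitone 0 (Nat.sub_le b.row 1)
  omega

theorem removableS_endBox_iff {r : ℕ} :
    RemovableS (cells lam) (endBox lam r) ↔ lam.part 0 (r + 1) < lam.part 0 r := by
  rw [removableS_cells_iff]
  simp only [endBox_row, endBox_col]
  omega

theorem eq_endBox_of_removableS {b : Box 1} (hb : RemovableS (cells lam) b) :
    b = endBox lam b.row :=
  Box.ext_one rfl (by simp only [endBox_col]; have := removableS_cells_iff.mp hb; omega)

theorem col_bounds_of_addableS_or_removableS {b : Box 1}
    (hb : AddableS (cells lam) b ∨ RemovableS (cells lam) b) :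
    lam.part 0 (b.row + 1) ≤ b.col ∧ lam.part 0 b.row ≤ b.col + 1 ∧ b.col ≤ lam.part 0 b.row := by
  have := lam.antitone 0 (Nat.le_add_right b.row 1)
  rcases hb with hb | hb
  · have := (addableS_cells_iff.mp hb).1; omega
  · have := removableS_cells_iff.mp hb; omega

theorem content_lt_of_row_lt {a b : Box 1}
    (ha : AddableS (cells lam) a ∨ RemovableS (cells lam) a)
    (hb : AddableS (cells lam) b ∨ RemovableS (cells lam) b) (h : a.row < b.row) :
    content b < content a := by
  have := col_bounds_of_addableS_or_removableS ha
  have := col_bounds_of_addableS_or_removableS hb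
  have := lam.antitone 0 (show a.row + 1 ≤ b.row from h)
  simp only [content]
  omega

theorem eq_of_content_eq {a b : Box 1}
    (ha : AddableS (cells lam) a ∨ RemovableS (cells lam) a)
    (hb : AddableS (cells lam) b ∨ RemovableS (cells lam) b) (h : content a = content b) :
    a = b := by
  rcases lt_trichotomy a.row b.row with hr | hr | hr
  · exact absurd h (content_lt_of_row_lt ha hb hr).ne'
  · exact Box.ext_one hr (by simp only [content] at h; omega)
  · exact absurd h (content_lt_of_row_lt hb ha hr).ne

theorem bleft_of_content_lt {a b : Box 1} (h : content b < content a) : Bleft θ a b := by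
  rw [Bleft, Prod.lex_iff, key, key, Subsingleton.elim a.comp 0, Subsingleton.elim b.comp 0]
  simp only [content] at h
  push_cast
  omega

theorem bleft_iff_content_lt {a b : Box 1}
    (ha : AddableS (cells lam) a ∨ RemovableS (cells lam) a)
    (hb : AddableS (cells lam) b ∨ RemovableS (cells lam) b) :
    Bleft θ a b ↔ content b < content a := by
  refine ⟨fun h => ?_, bleft_of_content_lt⟩
  rcases lt_trichotomy (content b) (content a) with hlt | heq | hgt
  · exact hlt
  · obtain rfl := eq_of_content_eq hb ha heq
    exact absurd h (bleft_asymm h)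
  · exact absurd (bleft_of_content_lt hgt) (bleft_asymm h)

theorem res_eq_iff_dvd {a b : Box 1} :
    res e κ a = res e κ b ↔ (e : ℤ) ∣ content a - content b := by
  have hres : ∀ c : Box 1, res e κ c = ((content c : ℤ) : ZMod e) + κ 0 := fun c => by
    rw [res, Subsingleton.elim c.comp 0, content]
    push_cast
    ring
  rw [hres, hres, add_left_inj, ZMod.intCast_eq_intCast_iff, Int.modEq_iff_dvd, dvd_sub_comm]

/-- `λ ∖ s` for a list `s` of removable boxes: each of them is the last box of its row. -/
def removeBoxes (lam : Multipartition 1) (s : List (Box 1))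
    (hs : ∀ b ∈ s, RemovableS (cells lam) b) : Multipartition 1 where
  part _ r := if endBox lam r ∈ s then lam.part 0 r - 1 else lam.part 0 r
  antitone _ := antitone_nat_of_succ_le fun r => by
    have := lam.antitone 0 (Nat.le_add_right r 1)
    by_cases h : endBox lam r ∈ s
    · have := removableS_endBox_iff.mp (hs _ h)
      split_ifs <;> omega
    · split_ifs <;> omega
  finite _ := by
    obtain ⟨N, hN⟩ := lam.finite 0
    exact ⟨N, fun r hr => by simp only [hN r hr]; split_ifs <;> rfl⟩

theorem cells_removeBoxes (s : List (Box 1)) (hs : ∀ b ∈ s, RemovableS (cells lam) b) :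
    cells (removeBoxes lam s hs) = cells lam \ {b | b ∈ s} := by
  ext b
  simp only [Set.mem_sdiff, Set.mem_ofPred_eq, mem_cells_one, removeBoxes]
  have hmem : b ∈ s ↔ endBox lam b.row ∈ s ∧ b.col = lam.part 0 b.row - 1 := by
    constructor
    · intro h
      have hb := eq_endBox_of_removableS (hs b h)
      exact ⟨hb ▸ h, congrArg Box.col hb⟩
    · rintro ⟨h, hcol⟩
      rwa [show b = endBox lam b.row from Box.ext_one rfl hcol]
  rw [hmem]
  split_ifs with h
  · have := removableS_endBox_iff.mp (hs _ h)
    simp only [h, true_and]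
    omega
  · simp [h]

theorem ncard_cells_removeBoxes_lt {s : List (Box 1)} (hs : ∀ b ∈ s, RemovableS (cells lam) b)
    (hne : s ≠ []) : (cells (removeBoxes lam s hs)).ncard < (cells lam).ncard := by
  obtain ⟨b, hb⟩ := List.exists_mem_of_ne_nil s hne
  rw [cells_removeBoxes]
  exact Set.ncard_lt_ncard ⟨Set.sdiff_subset, fun h => (h (hs b hb).1).2 hb⟩ (cells_finite lam)

/-- Consecutive boxes of the chain have no `i`-box between them, so the chain cannot jump over
the `i`-box `y`. -/
theorem bleft_getLast_of_isChain {y : Box 1} (hy : BTheta e κ lam i y) :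
    ∀ {s : List (Box 1)}, s.IsChain (AdjacentB e κ θ lam i) → y ∉ s →
      ∀ x ∈ s, Bleft θ x y → (hne : s ≠ []) → Bleft θ (s.getLast hne) y
  | [], _, _, x, hx, _, _ => absurd hx List.not_mem_nil
  | [a], _, _, x, hx, hxy, _ => by rwa [List.mem_singleton.mp hx] at hxy
  | a :: b :: t, hchain, hys, x, hx, hxy, _ => by
    rw [List.isChain_cons_cons] at hchain
    rw [List.getLast_cons (List.cons_ne_nil b t)]
    have hys' : y ∉ b :: t := fun h => hys (List.mem_cons_of_mem a h)
    rcases List.mem_cons.mp hx with rfl | hx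
    · obtain ⟨-, hb, -, hgap⟩ := hchain.1
      have hyb : y ≠ b := fun h => hys' (h ▸ List.mem_cons_self)
      have hby : Bleft θ b y := by
        rw [bleft_iff_content_lt hb.1 hy.1]
        have h1 := mt (eq_of_content_eq hy.1 hb.1) hyb
        have h2 := mt (bleft_iff_content_lt hy.1 hb.1).mpr fun h => hgap y hy ⟨hxy, h⟩
        omega
      exact bleft_getLast_of_isChain hy hchain.2 hys' b List.mem_cons_self hby _
    · exact bleft_getLast_of_isChain hy hchain.2 hys' x hx hxy _

theorem Staggered.part_ne_part_succ_add {s : List (Box 1)} (hs : Staggered e κ θ lam i s)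
    {r : ℕ} (hr : endBox lam r ∈ s) : lam.part 0 r ≠ lam.part 0 (r + 1) + e := by
  intro heq
  have hdrop := removableS_endBox_iff.mp (hs.removable _ hr).1
  set a : Box 1 := ⟨0, r + 1, lam.part 0 (r + 1)⟩
  have ha_add : AddableS (cells lam) a :=
    addableS_cells_iff.mpr ⟨rfl, Or.inr (by simpa [a] using hdrop)⟩
  have ha : BTheta e κ lam i a := by
    refine ⟨Or.inl ha_add, (res_eq_iff_dvd.mpr ⟨-1, ?_⟩).trans (hs.removable _ hr).2⟩
    simp only [content, endBox_row, endBox_col, a]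
    omega
  have ha_notin : a ∉ s := fun h => ha_add.1 (hs.removable a h).1.1
  have hra : Bleft θ (endBox lam r) a :=
    bleft_of_content_lt (by simp only [content, endBox_row, endBox_col, a]; omega)
  have hlast := bleft_getLast_of_isChain ha hs.chain ha_notin _ hr hra hs.ne
  rcases hs.last_max a ha with h | h
  · exact ha_notin (h ▸ List.getLast_mem hs.ne)
  · exact bleft_asymm h hlast

theorem isRestricted_of_uglov (he : 0 < e) (h : Uglov e κ θ lam) : IsRestricted e lam := by
  induction h with
  | empty lam h => simp [IsRestricted, part_eq_zero_of_cells_eq_empty h, he]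
  | step lam mu i s hs hmu _ ih =>
    intro r
    have hr := ih r
    rw [part_eq_of_cells_eq
      (hmu.trans (cells_removeBoxes s fun b hb => (hs.removable b hb).1).symm)] at hr
    simp only [removeBoxes] at hr
    have := lam.antitone 0 (Nat.le_add_right r 1)
    by_cases hmem : endBox lam r ∈ s
    · have := hs.part_ne_part_succ_add hmem
      have := removableS_endBox_iff.mp (hs.removable _ hmem).1
      split_ifs at hr <;> omega
    · split_ifs at hr <;> omega

theorem lt_of_content_endBox_lt {r r' : ℕ} (hr : RemovableS (cells lam) (endBox lam r))
    (hr' : RemovableS (cells lam) (endBox lam r'))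
    (h : content (endBox lam r') < content (endBox lam r)) : r < r' := by
  rcases lt_trichotomy r r' with hlt | rfl | hgt
  · exact hlt
  · exact absurd h (lt_irrefl _)
  · exact absurd h (content_lt_of_row_lt (Or.inr hr') (Or.inr hr) hgt).asymm

theorem lt_of_removableS_endBox {n r : ℕ} (hn : lam.part 0 n = 0)
    (hr : RemovableS (cells lam) (endBox lam r)) : r < n := by
  have := removableS_endBox_iff.mp hr
  by_contra! h
  have := lam.antitone 0 h
  omega

/-- The rows whose last boxes form the maximal run of removable `i`-boxes at the right end of the
`i`-boxes. -/
def IsTrailingRow (e : ℕ) (κ : Fin 1 → ZMod e) (lam : Multipartition 1) (i : ZMod e) (r : ℕ) :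
    Prop :=
  RemovableS (cells lam) (endBox lam r) ∧ res e κ (endBox lam r) = i ∧
    ∀ b, BTheta e κ lam i b → content b ≤ content (endBox lam r) → RemovableS (cells lam) b

open Classical in
noncomputable def trailingRows (e : ℕ) (κ : Fin 1 → ZMod e) (lam : Multipartition 1)
    (i : ZMod e) (n : ℕ) : List ℕ :=
  (List.range n).filter (IsTrailingRow e κ lam i ·)

noncomputable def trailingRun (e : ℕ) (κ : Fin 1 → ZMod e) (lam : Multipartition 1)
    (i : ZMod e) (n : ℕ) : List (Box 1) :=
  (trailingRows e κ lam i n).map (endBox lam)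

theorem mem_trailingRows {n r : ℕ} :
    r ∈ trailingRows e κ lam i n ↔ r < n ∧ IsTrailingRow e κ lam i r := by
  simp [trailingRows]

theorem pairwise_trailingRows (n : ℕ) : (trailingRows e κ lam i n).Pairwise (· < ·) :=
  List.Pairwise.sublist List.filter_sublist List.pairwise_lt_range

theorem endBox_mem_trailingRun {n r : ℕ} :
    endBox lam r ∈ trailingRun e κ lam i n ↔ r < n ∧ IsTrailingRow e κ lam i r := by
  rw [trailingRun, List.mem_map_of_injective endBox_injective, mem_trailingRows]

theorem trailingRows_succ {n : ℕ} (h : IsTrailingRow e κ lam i n) :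
    trailingRows e κ lam i (n + 1) = trailingRows e κ lam i n ++ [n] := by
  simp [trailingRows, List.range_succ, h]

theorem IsTrailingRow.row_of_content_le {r : ℕ} (hr : IsTrailingRow e κ lam i r) {b : Box 1}
    (hb : BTheta e κ lam i b) (hle : content b ≤ content (endBox lam r)) :
    IsTrailingRow e κ lam i b.row := by
  obtain ⟨-, -, hrun⟩ := hr
  have hb_eq := eq_endBox_of_removableS (hrun b hb hle)
  refine ⟨hb_eq ▸ hrun b hb hle, hb_eq ▸ hb.2, fun w hw hwle => hrun w hw ?_⟩
  rw [← hb_eq] at hwle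
  exact hwle.trans hle

theorem isChain_adjacentB_trailingRun {n : ℕ} (hn : lam.part 0 n = 0) :
    (trailingRun e κ lam i n).IsChain (AdjacentB e κ θ lam i) := by
  rw [trailingRun, List.isChain_map]
  refine (pairwise_trailingRows n).isChain_consecutive
    |>.imp_of_mem_imp fun r r' hr hr' ⟨hlt, hgap⟩ => ?_
  have htr := (mem_trailingRows.mp hr).2
  obtain ⟨-, hrem', hres', -⟩ := mem_trailingRows.mp hr'
  have hrem := htr.1
  refine ⟨⟨Or.inr hrem, htr.2.1⟩, ⟨Or.inr hrem', hres'⟩,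
    bleft_of_content_lt (content_lt_of_row_lt (Or.inr hrem) (Or.inr hrem') hlt),
    fun x hx ⟨h1, h2⟩ => ?_⟩
  rw [bleft_iff_content_lt (Or.inr hrem) hx.1] at h1
  rw [bleft_iff_content_lt hx.1 (Or.inr hrem')] at h2
  have hx_tr := htr.row_of_content_le hx h1.le
  have hx_eq := eq_endBox_of_removableS (htr.2.2 x hx h1.le)
  rw [hx_eq] at h1 h2
  exact hgap x.row (mem_trailingRows.mpr ⟨lt_of_removableS_endBox hn hx_tr.1, hx_tr⟩)
    ⟨lt_of_content_endBox_lt hrem hx_tr.1 h1, lt_of_content_endBox_lt hx_tr.1 hrem' h2⟩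

theorem addableS_of_adjacentB_head {n : ℕ} (hn : lam.part 0 n = 0)
    (hne : trailingRun e κ lam i n ≠ []) {a : Box 1}
    (ha : AdjacentB e κ θ lam i a ((trailingRun e κ lam i n).head hne)) :
    AddableS (cells lam) a := by
  obtain ⟨ha, -, hlt, hgap⟩ := ha
  rcases ha.1 with hadd | hrem
  · exact hadd
  exfalso
  obtain ⟨r1, t, hl⟩ : ∃ r1 t, trailingRows e κ lam i n = r1 :: t :=
    List.exists_cons_of_ne_nil (by simpa [trailingRun] using hne)
  have hhead : (trailingRun e κ lam i n).head hne = endBox lam r1 := by simp [trailingRun, hl]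
  rw [hhead] at hlt hgap
  have htr := (mem_trailingRows.mp (hl ▸ List.mem_cons_self)).2
  rw [bleft_iff_content_lt ha.1 (Or.inr htr.1)] at hlt
  have ha_eq := eq_endBox_of_removableS hrem
  have ha_tr : IsTrailingRow e κ lam i a.row := by
    refine ⟨ha_eq ▸ hrem, ha_eq ▸ ha.2, fun w hw hwa => ?_⟩
    rw [← ha_eq] at hwa
    rcases le_or_gt (content w) (content (endBox lam r1)) with h | h
    · exact htr.2.2 w hw h
    rcases hwa.eq_or_lt with h' | h'
    · rw [eq_of_content_eq hw.1 ha.1 h']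
      exact hrem
    · exact absurd ⟨bleft_of_content_lt h', bleft_of_content_lt h⟩ (hgap w hw)
  rw [ha_eq] at hlt
  have hrow : a.row < r1 := lt_of_content_endBox_lt ha_tr.1 htr.1 hlt
  have hmem : a.row ∈ r1 :: t :=
    hl ▸ mem_trailingRows.mpr ⟨lt_of_removableS_endBox hn ha_tr.1, ha_tr⟩
  have hsorted : (r1 :: t).Pairwise (· < ·) := hl ▸ pairwise_trailingRows n
  rcases List.mem_cons.mp hmem with h | h
  · exact hrow.ne h
  · exact lt_asymm hrow ((List.pairwise_cons.mp hsorted).1 _ h)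

theorem content_endBox_le_of_bTheta (hres : IsRestricted e lam) {r0 : ℕ}
    (hr0 : 0 < lam.part 0 r0) (hr0' : lam.part 0 (r0 + 1) = 0) {b : Box 1}
    (hb : BTheta e κ lam (res e κ (endBox lam r0)) b) :
    content (endBox lam r0) ≤ content b := by
  have hrem0 : RemovableS (cells lam) (endBox lam r0) := removableS_endBox_iff.mpr (by omega)
  have hbounds := col_bounds_of_addableS_or_removableS hb.1
  rcases lt_trichotomy b.row r0 with hlt | heq | hgt
  · exact (content_lt_of_row_lt hb.1 (Or.inr hrem0) hlt).le
  · simp only [content, endBox_row, endBox_col, heq] at hbounds ⊢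
    omega
  · -- `b` can only be the addable box `(r0 + 1, 0)`, whose residue would force `e ∣ λ_{r0}`
    exfalso
    have hzero : lam.part 0 b.row = 0 := by
      have := lam.antitone 0 (show r0 + 1 ≤ b.row by omega)
      omega
    have hrow : b.row = r0 + 1 := by
      rcases hb.1 with hadd | hrem
      · have := (addableS_cells_iff.mp hadd).2
        by_contra hne
        have := lam.antitone 0 (show r0 + 1 ≤ b.row - 1 by omega)
        omega
      · have := (removableS_cells_iff.mp hrem).1
        omega
    have hdiff : content b - content (endBox lam r0) = -(lam.part 0 r0 : ℤ) := by
      simp only [content, endBox_row, endBox_col, hrow]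
      omega
    have hdvd : (e : ℤ) ∣ lam.part 0 r0 := by
      rw [← dvd_neg, ← hdiff, ← res_eq_iff_dvd]
      exact hb.2
    have := Int.le_of_dvd (by exact_mod_cast hr0) hdvd
    have := hres r0
    omega

theorem isTrailingRow_last (hres : IsRestricted e lam) {r0 : ℕ} (hr0 : 0 < lam.part 0 r0)
    (hr0' : lam.part 0 (r0 + 1) = 0) :
    IsTrailingRow e κ lam (res e κ (endBox lam r0)) r0 := by
  have hrem0 : RemovableS (cells lam) (endBox lam r0) := removableS_endBox_iff.mpr (by omega)
  refine ⟨hrem0, rfl, fun b hb hle => ?_⟩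
  rw [eq_of_content_eq hb.1 (Or.inr hrem0)
    (le_antisymm hle (content_endBox_le_of_bTheta hres hr0 hr0' hb))]
  exact hrem0

/-- No `i`-box fits strictly between the last boxes of rows `r` and `r + 1`, which are `e` apart. -/
theorem IsTrailingRow.of_succ (he : 2 ≤ e) {r : ℕ} (h : IsTrailingRow e κ lam i (r + 1))
    (heq : lam.part 0 r + 1 = lam.part 0 (r + 1) + e) : IsTrailingRow e κ lam i r := by
  obtain ⟨hrem, hres, hrun⟩ := h
  have := removableS_endBox_iff.mp hrem
  have hcont : content (endBox lam r) - content (endBox lam (r + 1)) = e := by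
    simp only [content, endBox_row, endBox_col]
    omega
  have hrem' : RemovableS (cells lam) (endBox lam r) := removableS_endBox_iff.mpr (by omega)
  refine ⟨hrem', (res_eq_iff_dvd.mpr ⟨1, by rw [hcont, mul_one]⟩).trans hres,
    fun w hw hle => ?_⟩
  rcases le_or_gt (content w) (content (endBox lam (r + 1))) with h | h
  · exact hrun w hw h
  · have := Int.le_of_dvd (sub_pos.mpr h) (res_eq_iff_dvd.mp (hw.2.trans hres.symm))
    rw [eq_of_content_eq hw.1 (Or.inr hrem') (by omega)]
    exact hrem'

theorem isRestricted_removeBoxes (hres : IsRestricted e lam) {s : List (Box 1)}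
    (hs : ∀ b ∈ s, RemovableS (cells lam) b)
    (hclosed : ∀ r, endBox lam (r + 1) ∈ s → lam.part 0 r + 1 = lam.part 0 (r + 1) + e →
      endBox lam r ∈ s) :
    IsRestricted e (removeBoxes lam s hs) := by
  intro r
  have := hres r
  have := lam.antitone 0 (Nat.le_add_right r 1)
  simp only [removeBoxes]
  split_ifs with h1 h2 h2
  · have := removableS_endBox_iff.mp (hs _ h1)
    omega
  · have := removableS_endBox_iff.mp (hs _ h1)
    omega
  · have := mt (hclosed r h2) h1
    omega
  · omega

theorem staggered_trailingRun (hres : IsRestricted e lam) {r0 : ℕ} (hr0 : 0 < lam.part 0 r0)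
    (hr0' : lam.part 0 (r0 + 1) = 0) :
    Staggered e κ θ lam (res e κ (endBox lam r0))
      (trailingRun e κ lam (res e κ (endBox lam r0)) (r0 + 1)) := by
  have hlast := isTrailingRow_last (κ := κ) hres hr0 hr0'
  have hsplit : trailingRun e κ lam (res e κ (endBox lam r0)) (r0 + 1) =
      trailingRun e κ lam (res e κ (endBox lam r0)) r0 ++ [endBox lam r0] := by
    simp [trailingRun, trailingRows_succ hlast]
  have hne : trailingRun e κ lam (res e κ (endBox lam r0)) (r0 + 1) ≠ [] := by simp [hsplit]
  refine ⟨hne, (List.nodup_range.filter _).map endBox_injective, fun b hb => ?_,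
    isChain_adjacentB_trailingRun hr0', fun b hb => ?_,
    fun _ => addableS_of_adjacentB_head hr0' hne⟩
  · obtain ⟨r, hr, rfl⟩ := List.mem_map.mp hb
    obtain ⟨-, hrem, hres, -⟩ := mem_trailingRows.mp hr
    exact ⟨hrem, hres⟩
  · have hget : (trailingRun e κ lam (res e κ (endBox lam r0)) (r0 + 1)).getLast hne =
        endBox lam r0 := by simp [hsplit]
    rw [hget]
    rcases (content_endBox_le_of_bTheta hres hr0 hr0' hb).eq_or_lt with h | h
    · exact Or.inl (eq_of_content_eq hb.1 (Or.inr hlast.1) h.symm)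
    · exact Or.inr (bleft_of_content_lt h)

theorem uglov_of_isRestricted (he : 2 ≤ e) (hres : IsRestricted e lam) : Uglov e κ θ lam := by
  induction hn : (cells lam).ncard using Nat.strong_induction_on generalizing lam with
  | _ n ih =>
  rcases (cells lam).eq_empty_or_nonempty with hemp | hne
  · exact .empty lam hemp
  obtain ⟨r0, hr0, hr0'⟩ := exists_part_pos_part_succ_eq_zero hne
  set s := trailingRun e κ lam (res e κ (endBox lam r0)) (r0 + 1)
  have hs : Staggered e κ θ lam _ s := staggered_trailingRun hres hr0 hr0'
  have hrem : ∀ b ∈ s, RemovableS (cells lam) b := fun b hb => (hs.removable b hb).1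
  have hclosed : ∀ r, endBox lam (r + 1) ∈ s → lam.part 0 r + 1 = lam.part 0 (r + 1) + e →
      endBox lam r ∈ s := by
    intro r hr heq
    obtain ⟨hlt, htr⟩ := endBox_mem_trailingRun.mp hr
    exact endBox_mem_trailingRun.mpr ⟨by omega, htr.of_succ he heq⟩
  have hsmaller := hn ▸ ncard_cells_removeBoxes_lt hrem hs.ne
  exact .step lam _ _ s hs (cells_removeBoxes s hrem)
    (ih _ hsmaller (isRestricted_removeBoxes hres hrem hclosed) rfl)

end CQHA

open CQHA

/-- (Misra–Miwa, level `ℓ = 1`.) A partition is an Uglov (equivalently,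
staggered) partition for the parameter `e` if and only if it is `e`-restricted, i.e.
`λ_i − λ_{i+1} < e` for all `i`. -/
theorem uglov_iff_e_restricted_level_one (e : ℕ) (he : 2 ≤ e)
    (κ : Fin 1 → ZMod e) (θ : Fin 1 → ℤ) (lam : Multipartition 1) :
    Uglov e κ θ lam ↔ ∀ i : ℕ, lam.part 0 i - lam.part 0 (i + 1) < e :=
  ⟨isRestricted_of_uglov (by omega), uglov_of_isRestricted he⟩
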